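/- arXiv:1004.4127 — 2 statements merged into one kernel-verified Lean document; each statement's English description precedes it below -/
import Mathlib

section
/- For every odd integer m = 2n+1, the set F = { [(0,0),(0,2i),(2,i) ⋈ (1,0)], [(0,0),(4,i),(1,−i) ⋈ (6,i)] : i = 1,…,n } of kites with vertices in Z₈ × Z_m is a (Z₈ × Z_m, Z₈ × {0}, D, 1)-difference family, i.e., the multiset of differences of adjacent vertices covers each element of (Z₈ × Z_m) \ (Z₈ × {0}) exactly once and no element of Z₈ × {0} occurs. -/
open SimpleGraph

/-- The complete graph on the set `s` of natural numbers, viewed as a graph on `ℕ`. -/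
def Kon (s : Set ℕ) : SimpleGraph ℕ where
  Adj x y := x ≠ y ∧ x ∈ s ∧ y ∈ s
  symm := ⟨fun x y ⟨h, hx, hy⟩ => ⟨h.symm, hy, hx⟩⟩
  loopless := ⟨fun x h => h.1 rfl⟩

/-- `B` is a copy of `Γ`: there is an injection of vertices under which the
edges of `B` are exactly the images of the edges of `Γ`. -/
def IsCopy {α β : Type*} (Γ : SimpleGraph α) (B : SimpleGraph β) : Prop :=
  ∃ φ : α ↪ β, ∀ x y : β, B.Adj x y ↔ ∃ a b, Γ.Adj a b ∧ φ a = x ∧ φ b = y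

/-- A `(G, Γ)`-design: a set of copies of `Γ`, each a subgraph of `G` with
nonempty edge set, whose edge sets partition the edge set of `G`. -/
def IsDesign {α β : Type*} (G : SimpleGraph β) (Γ : SimpleGraph α)
    (D : Set (SimpleGraph β)) : Prop :=
  (∀ B ∈ D, B ≤ G ∧ IsCopy Γ B ∧ B.edgeSet.Nonempty) ∧
  ∀ e ∈ G.edgeSet, ∃! B, B ∈ D ∧ e ∈ B.edgeSet

/-- A down-link from the design `D` to the design `D'`: each block is mapped
to a subgraph of itself. -/
def IsDownlink {β : Type*} (D D' : Set (SimpleGraph β))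
    (f : SimpleGraph β → SimpleGraph β) : Prop :=
  ∀ B ∈ D, f B ∈ D' ∧ f B ≤ B

/-- The list of differences of the kite `[a, b, c ⋈ d]`, whose edges are
`{c,a}, {c,b}, {c,d}, {a,b}`. -/
def kiteDiffs {G : Type*} [AddCommGroup G] (a b c d : G) : Multiset G :=
  {c - a, a - c, c - b, b - c, c - d, d - c, a - b, b - a}

/-!
For each `i`, the sixteen differences of the two kites with parameter `i` contribute to every
first coordinate `x ∈ ℤ₈` exactly the two elements `(x, ±s(x)·i)`, where `s(x) ∈ {1, 2}`.
As `m = 2n+1` is odd, `s(x)` is a unit of `ℤ_m`, and `±s(x)·{1, …, n}` lists every nonzero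
residue exactly once, since `±{1, …, n}` does.
-/

open Finset

lemma ZMod.eq_natCast_iff_val_eq {m i : ℕ} [NeZero m] (hi : i < m) (y : ZMod m) :
    y = i ↔ y.val = i := by
  rw [← (ZMod.val_injective m).eq_iff, ZMod.val_natCast_of_lt hi]

lemma count_bind_Icc_pm (n : ℕ) (y : ZMod (2 * n + 1)) :
    Multiset.count y
        ((Icc 1 n).val.bind fun i => {(i : ZMod (2 * n + 1)), -(i : ZMod (2 * n + 1))}) =
      if y = 0 then 0 else 1 := by
  have hcount : ∀ i ∈ Icc 1 n,
      Multiset.count y {(i : ZMod (2 * n + 1)), -(i : ZMod (2 * n + 1))} =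
        (if y.val = i then 1 else 0) + (if (-y).val = i then 1 else 0) := by
    intro i hmem
    have hi : i < 2 * n + 1 := by simp only [mem_Icc] at hmem; omega
    simp only [Multiset.insert_eq_cons, Multiset.count_cons, Multiset.count_singleton,
      ← neg_eq_iff_eq_neg (a := y), ZMod.eq_natCast_iff_val_eq hi, add_comm]
  rw [Multiset.count_bind, ← sum_eq_multiset_sum, sum_congr rfl hcount, sum_add_distrib,
    sum_ite_eq, sum_ite_eq, ZMod.neg_val]
  have hlt := ZMod.val_lt y
  by_cases hy : y = 0
  · simp [hy]
  · have hpos := (ZMod.val_ne_zero y).mpr hy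
    simp only [hy, if_false, mem_Icc]
    split_ifs <;> omega

lemma count_bind_Icc_mul_pm (n : ℕ) {u : ZMod (2 * n + 1)} (hu : IsUnit u)
    (y : ZMod (2 * n + 1)) :
    Multiset.count y ((Icc 1 n).val.bind fun i => {u * i, -(u * i)}) =
      if y = 0 then 0 else 1 := by
  obtain ⟨u, rfl⟩ := hu
  have hmap (i : ℕ) :
      ({(u : ZMod (2 * n + 1)) * i, -((u : ZMod (2 * n + 1)) * i)} : Multiset _) =
        Multiset.map ((u : ZMod (2 * n + 1)) * ·)
          {(i : ZMod (2 * n + 1)), -(i : ZMod (2 * n + 1))} := by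
    simp
  conv_lhs => rw [← Units.mul_inv_cancel_left u y]
  simp_rw [hmap, ← Multiset.map_bind]
  rw [Multiset.count_map_eq_count' _ _ u.isUnit.mul_right_injective, count_bind_Icc_pm]
  simp

lemma kiteDiffs_add_kiteDiffs {R : Type*} [CommRing R] (i : R) :
    kiteDiffs ((0, 0) : ZMod 8 × R) (0, 2 * i) (2, i) (1, 0) +
        kiteDiffs (0, 0) (4, i) (1, -i) (6, i) =
      {(2, i), (6, -i), (2, -i), (6, i), (1, i), (7, -i), (0, -(2 * i)), (0, 2 * i),
       (1, -i), (7, i), (5, -(2 * i)), (3, 2 * i), (3, -(2 * i)), (5, 2 * i), (4, -i), (4, i)} := by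
  simp only [kiteDiffs, Multiset.insert_eq_cons, Multiset.cons_add, Multiset.singleton_add,
    Prod.mk_sub_mk]
  reduce_mod_char
  ring_nf

/-- The factor `s(x)`: the differences with first coordinate `x` are `(x, ±s(x)·i)`. -/
def kiteScale (x : ZMod 8) : ℕ := if x = 0 ∨ x = 3 ∨ x = 5 then 2 else 1

lemma kiteScale_coprime (x : ZMod 8) {m : ℕ} (hm : Odd m) : (kiteScale x).Coprime m := by
  unfold kiteScale
  split_ifs
  · exact Nat.coprime_two_left.mpr hm
  · exact Nat.coprime_one_left m

lemma count_kiteDiffs_add_kiteDiffs {R : Type*} [CommRing R] [DecidableEq R] (i : R)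
    (x : ZMod 8) (y : R) :
    Multiset.count (x, y)
        (kiteDiffs (0, 0) (0, 2 * i) (2, i) (1, 0) + kiteDiffs (0, 0) (4, i) (1, -i) (6, i)) =
      Multiset.count y {(kiteScale x : R) * i, -((kiteScale x : R) * i)} := by
  rw [kiteDiffs_add_kiteDiffs]
  obtain rfl | rfl | rfl | rfl | rfl | rfl | rfl | rfl :
      x = 0 ∨ x = 1 ∨ x = 2 ∨ x = 3 ∨ x = 4 ∨ x = 5 ∨ x = 6 ∨ x = 7 := by
    revert x; decide
  all_goals
    simp +decide only [kiteScale, Multiset.insert_eq_cons,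
      Multiset.count_cons, Multiset.count_singleton, Prod.mk.injEq, false_and, true_and,
      ite_false, ite_true, add_zero, zero_add, Nat.cast_ofNat, Nat.cast_one, one_mul, add_comm]

/-- For odd `m = 2n+1`, the family
`{[(0,0),(0,2i),(2,i) ⋈ (1,0)], [(0,0),(4,i),(1,-i) ⋈ (6,i)] : 1 ≤ i ≤ n}`
is a `(ℤ₈ × ℤ_m, ℤ₈ × {0}, D, 1)`-difference family: every element outside
`ℤ₈ × {0}` occurs exactly once among the differences, and no element of
`ℤ₈ × {0}` occurs. -/
theorem stmt14 (n : ℕ) (g : ZMod 8 × ZMod (2 * n + 1)) :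
    Multiset.count g ((Finset.Icc 1 n).val.bind fun i =>
      kiteDiffs ((0, 0) : ZMod 8 × ZMod (2 * n + 1))
          (0, ((2 * i : ℕ) : ZMod (2 * n + 1))) (2, ((i : ℕ) : ZMod (2 * n + 1))) (1, 0) +
      kiteDiffs ((0, 0) : ZMod 8 × ZMod (2 * n + 1))
          (4, ((i : ℕ) : ZMod (2 * n + 1))) (1, -((i : ℕ) : ZMod (2 * n + 1)))
          (6, ((i : ℕ) : ZMod (2 * n + 1)))) =
      if g.2 = 0 then 0 else 1 := by
  obtain ⟨x, y⟩ := g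
  have hunit : IsUnit ((kiteScale x : ℕ) : ZMod (2 * n + 1)) :=
    (ZMod.isUnit_iff_coprime _ _).mpr (kiteScale_coprime x (odd_two_mul_add_one n))
  rw [← count_bind_Icc_mul_pm n hunit y, Multiset.count_bind, Multiset.count_bind]
  congr 1
  refine Multiset.map_congr rfl fun i _ => ?_
  rw [Nat.cast_mul, Nat.cast_ofNat, count_kiteDiffs_add_kiteDiffs]
end

section
/- If a (K_v,P₄)-design B can be down-linked to a (K_n,P₃)-design, then n ≥ v−1. -/
open SimpleGraph

/-!
If `v ≥ n + 2`, the edge `{n, n+1}` of `K_v` lies in some `P₄`-block `B`. Its image `f B` is a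
`P₃` inside `K_n`, so its three vertices avoid both `n` and `n + 1`; together with these they give
five distinct vertices of `B`, which has only four.
-/

lemma support_subset_of_le_Kon {G : SimpleGraph ℕ} {s : Set ℕ} (h : G ≤ Kon s) :
    G.support ⊆ s := fun _ ⟨_, hx⟩ => (h hx).2.1

lemma pathGraph_support {n : ℕ} (hn : 2 ≤ n) : (pathGraph n).support = Set.univ := by
  refine Set.eq_univ_of_forall fun i => ?_
  by_cases h : i.val + 1 < n
  · exact ⟨⟨i + 1, h⟩, pathGraph_adj.2 (Or.inl rfl)⟩
  · exact ⟨⟨i - 1, by omega⟩, pathGraph_adj.2 (Or.inr (by simp only; omega))⟩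

lemma ncard_support_pathGraph {n : ℕ} (hn : 2 ≤ n) : (pathGraph n).support.ncard = n := by
  rw [pathGraph_support hn, Set.ncard_univ, Nat.card_eq_fintype_card, Fintype.card_fin]

namespace IsCopy

variable {α β : Type*} {Γ : SimpleGraph α} {B : SimpleGraph β}

lemma exists_support_eq_image (h : IsCopy Γ B) : ∃ φ : α ↪ β, B.support = φ '' Γ.support := by
  obtain ⟨φ, hφ⟩ := h
  refine ⟨φ, Set.ext fun x => ⟨fun ⟨y, hxy⟩ => ?_, ?_⟩⟩
  · obtain ⟨a, b, hab, rfl, -⟩ := (hφ x y).1 hxy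
    exact ⟨a, ⟨b, hab⟩, rfl⟩
  · rintro ⟨a, ⟨b, hab⟩, rfl⟩
    exact ⟨φ b, (hφ _ _).2 ⟨a, b, hab, rfl, rfl⟩⟩

lemma ncard_support (h : IsCopy Γ B) : B.support.ncard = Γ.support.ncard := by
  obtain ⟨φ, hφ⟩ := h.exists_support_eq_image
  rw [hφ, Set.ncard_image_of_injective _ φ.injective]

end IsCopy

lemma IsDesign.exists_mem_adj {α β : Type*} {G : SimpleGraph β} {Γ : SimpleGraph α}
    {D : Set (SimpleGraph β)} (hD : IsDesign G Γ D) {x y : β} (hxy : G.Adj x y) :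
    ∃ B ∈ D, B.Adj x y :=
  let ⟨B, ⟨hB, hxyB⟩, _⟩ := hD.2 s(x, y) hxy
  ⟨B, hB, hxyB⟩

lemma ncard_support_add_two_le {β : Type*} {H B : SimpleGraph β} {s : Set β} (hHB : H ≤ B)
    (hH : H.support ⊆ s) (hB : B.support.Finite) {x y : β} (hxy : B.Adj x y) (hx : x ∉ s)
    (hy : y ∉ s) : H.support.ncard + 2 ≤ B.support.ncard := by
  have hsub : H.support ∪ {x, y} ⊆ B.support :=
    Set.union_subset (support_mono hHB)
      (Set.insert_subset ⟨y, hxy⟩ (Set.singleton_subset_iff.2 ⟨x, hxy.symm⟩))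
  have hdisj : Disjoint H.support {x, y} := by
    rw [Set.disjoint_insert_right, Set.disjoint_singleton_right]
    exact ⟨fun h => hx (hH h), fun h => hy (hH h)⟩
  calc H.support.ncard + 2 = (H.support ∪ {x, y}).ncard := by
        rw [Set.ncard_union_eq hdisj (hB.subset (support_mono hHB)), Set.ncard_pair hxy.ne]
    _ ≤ B.support.ncard := Set.ncard_le_ncard hsub hB

/-- A down-link from a `(K_v,P₄)`-design to a `(K_n,P₃)`-design forces
`n ≥ v - 1`. -/
theorem stmt16 (v n : ℕ) (D D' : Set (SimpleGraph ℕ))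
    (hD : IsDesign (Kon (Set.Iio v)) (pathGraph 4) D)
    (hD' : IsDesign (Kon (Set.Iio n)) (pathGraph 3) D')
    (f : SimpleGraph ℕ → SimpleGraph ℕ) (hf : IsDownlink D D' f) :
    v - 1 ≤ n := by
  by_contra! hvn
  have hedge : (Kon (Set.Iio v)).Adj n (n + 1) := ⟨by omega, Set.mem_Iio.2 (by omega), Set.mem_Iio.2 (by omega)⟩
  obtain ⟨B, hBD, hB⟩ := hD.exists_mem_adj hedge
  obtain ⟨hfBD', hfB⟩ := hf B hBD
  obtain ⟨hfBK, hfBcopy, -⟩ := hD'.1 (f B) hfBD'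
  have hBcard : B.support.ncard = 4 := by
    rw [(hD.1 B hBD).2.1.ncard_support, ncard_support_pathGraph (by norm_num)]
  have hcard := ncard_support_add_two_le hfB (support_subset_of_le_Kon hfBK)
    (Set.finite_of_ncard_pos (by omega)) hB (by simp) (by simp)
  rw [hfBcopy.ncard_support, ncard_support_pathGraph (by norm_num), hBcard] at hcard
  omega
end
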